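/- If p ≥ q ≥ 2 and d = gcd(p,q) satisfies 1 ≤ d < q, then the minimum nonzero value of ν(x^p − y^q) − ν(x^p − y^q + x^a y^b) over monomials x^a y^b with (a,b) ∈ ℕ² on or below the axes side of the segment from (p,0) to (0,q) equals d. -/

import Mathlib

open MvPolynomial MeasureTheory

/-- The region `Γ₊(f)`: convex closure of the union of translated positive quadrants at the
points of the support of `f` (omitting the origin). -/
noncomputable def gammaPlus (f : MvPolynomial (Fin 2) ℂ) : Set (ℝ × ℝ) :=
  convexHull ℝ (⋃ m ∈ {m ∈ f.support | m ≠ 0},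
    {z : ℝ × ℝ | (m 0 : ℝ) ≤ z.1 ∧ (m 1 : ℝ) ≤ z.2})

/-- The region bounded by the Newton polygon `Γ(f)` and the coordinate axes. -/
noncomputable def newtonRegion (f : MvPolynomial (Fin 2) ℂ) : Set (ℝ × ℝ) :=
  {z : ℝ × ℝ | 0 ≤ z.1 ∧ 0 ≤ z.2} \ gammaPlus f

/-- The Newton number `ν(f) = 2S - a - b + 1` where `S` is the area of the region bounded
by the Newton polygon and the axes and `a`, `b` are the lengths of the intersections of that
region with the `x`- and `y`-axis. -/
noncomputable def newtonNumber (f : MvPolynomial (Fin 2) ℂ) : ℝ :=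
  2 * (volume (newtonRegion f)).toReal
    - (volume {x : ℝ | (x, (0:ℝ)) ∈ newtonRegion f}).toReal
    - (volume {y : ℝ | ((0:ℝ), y) ∈ newtonRegion f}).toReal + 1


/-!
Every Newton region occurring here lies below a polygonal line `(0,Q)`–`(a,b)`–`(P,0)` with
`Q a + P b ≤ P Q`, and its Newton number is `Q a + P b - P - Q + 1`; a triangle is the case where
`(a,b)` is the midpoint of the hypotenuse. Thus `ν(x^p - y^q) = p q - p - q + 1`, and adding
`x^a y^b` with `a, b > 0` lowers it by `p q - q a - p b`, a positive multiple of `d = gcd(p,q)`;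
by Bézout the value `d` is attained. A monomial on an axis lowers `ν` by `(p-1)(q-b)` or
`(q-1)(p-a)`, which is at least `d` since `d < q ≤ p`, and a constant term does not change `Γ₊`.
-/

open Set Pointwise

theorem isUpperSet_convexHull {E : Type*} [AddCommGroup E] [PartialOrder E]
    [IsOrderedAddMonoid E] [Module ℝ E] [PosSMulMono ℝ E] {s : Set E} (hs : IsUpperSet s) :
    IsUpperSet (convexHull ℝ s) := by
  intro z z' hzz' hz
  have hK : z' - z ∈ convexHull ℝ (Ici (0 : E)) := by
    rw [(convex_Ici (0 : E)).convexHull_eq]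
    exact sub_nonneg.2 hzz'
  have hsum : s + Ici (0 : E) ⊆ s := by
    rintro _ ⟨u, hu, δ, hδ, rfl⟩
    exact hs (le_add_of_nonneg_right hδ) hu
  have : z' ∈ convexHull ℝ (s + Ici (0 : E)) := by
    rw [convexHull_add]
    exact ⟨z, hz, z' - z, hK, add_sub_cancel z z'⟩
  exact convexHull_mono hsum this

theorem volume_subgraph_Ico {l r : ℝ} {φ : ℝ → ℝ} (hφ : Continuous φ) (hlr : l ≤ r)
    (hφ₀ : ∀ x ∈ Ico l r, 0 ≤ φ x) :
    volume {z : ℝ × ℝ | z.1 ∈ Ico l r ∧ z.2 ∈ Ico 0 (φ z.1)} =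
      ENNReal.ofReal (∫ x in l..r, φ x) := by
  have hnull : volume {z : ℝ × ℝ | z.2 = 0} = 0 := by
    have : {z : ℝ × ℝ | z.2 = 0} = univ ×ˢ {0} := by ext; simp
    rw [this, Measure.volume_eq_prod, Measure.prod_prod, Real.volume_singleton, mul_zero]
  have hregion : volume (regionBetween (fun _ => 0) φ (Ico l r)) =
      ENNReal.ofReal (∫ x in l..r, φ x) := by
    rw [Measure.volume_eq_prod, volume_regionBetween_eq_integral (integrableOn_const
      measure_Ico_lt_top.ne) (hφ.integrableOn_Icc.mono_set Ico_subset_Icc_self) measurableSet_Ico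
      hφ₀, intervalIntegral.integral_of_le hlr, integral_Ico_eq_integral_Ioo,
      integral_Ioc_eq_integral_Ioo]
    simp only [Pi.sub_apply, sub_zero]
  refine le_antisymm ?_ (hregion ▸ measure_mono fun z ⟨hz₁, hz₂⟩ => ⟨hz₁, hz₂.1.le, hz₂.2⟩)
  calc volume {z : ℝ × ℝ | z.1 ∈ Ico l r ∧ z.2 ∈ Ico 0 (φ z.1)}
      ≤ volume (regionBetween (fun _ => 0) φ (Ico l r) ∪ {z : ℝ × ℝ | z.2 = 0}) := by
        refine measure_mono fun z ⟨hz₁, hz₂, hz₃⟩ => ?_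
        rcases hz₂.eq_or_lt with h | h
        · exact Or.inr h.symm
        · exact Or.inl ⟨hz₁, h, hz₃⟩
    _ ≤ _ := (measure_union_le _ _).trans_eq (by rw [hnull, add_zero, hregion])

/-- The closed region of the quadrant on or above the polygonal line `(P,0)`–`(a,b)`–`(0,Q)`. -/
def abovePolygon (P Q a b : ℝ) : Set (ℝ × ℝ) :=
  {z | 0 ≤ z.1 ∧ 0 ≤ z.2 ∧ b * P ≤ b * z.1 + (P - a) * z.2 ∧ a * Q ≤ (Q - b) * z.1 + a * z.2}

section Polygon

variable {P Q a b : ℝ}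

theorem convex_abovePolygon : Convex ℝ (abovePolygon P Q a b) := by
  rintro x ⟨hx₁, hx₂, hx₃, hx₄⟩ y ⟨hy₁, hy₂, hy₃, hy₄⟩ s t hs ht hst
  refine ⟨?_, ?_, ?_, ?_⟩ <;> simp only [Prod.fst_add, Prod.snd_add, Prod.smul_fst,
    Prod.smul_snd, smul_eq_mul]
  · positivity
  · positivity
  · linear_combination s * hx₃ + t * hy₃ - (b * P) * hst
  · linear_combination s * hx₄ + t * hy₄ - (a * Q) * hst

theorem isUpperSet_abovePolygon (ha : 0 ≤ a) (haP : a ≤ P) (hb : 0 ≤ b) (hbQ : b ≤ Q) :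
    IsUpperSet (abovePolygon P Q a b) := by
  rintro z z' ⟨h₁, h₂⟩ ⟨hz₁, hz₂, hz₃, hz₄⟩
  refine ⟨hz₁.trans h₁, hz₂.trans h₂, ?_, ?_⟩
  · nlinarith [mul_le_mul_of_nonneg_left h₁ hb, mul_le_mul_of_nonneg_left h₂ (sub_nonneg.2 haP)]
  · nlinarith [mul_le_mul_of_nonneg_left h₁ (sub_nonneg.2 hbQ), mul_le_mul_of_nonneg_left h₂ ha]

theorem exists_segment_le_of_mem_abovePolygon (ha : 0 < a) (haP : a < P) {z : ℝ × ℝ}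
    (hz : z ∈ abovePolygon P Q a b) :
    ∃ w ∈ segment ℝ (P, 0) (a, b) ∪ segment ℝ (a, b) (0, Q), w ≤ z := by
  obtain ⟨x, y⟩ := z
  obtain ⟨hx, hy, h₁, h₂⟩ := hz
  simp only at hx hy h₁ h₂
  rcases le_or_gt P x with hPx | hxP
  · exact ⟨(P, 0), Or.inl (left_mem_segment ℝ _ _), hPx, hy⟩
  rcases le_or_gt a x with hax | hxa
  · obtain ⟨t, ht⟩ : ∃ t, t * (P - a) = P - x :=
      ⟨(P - x) / (P - a), div_mul_cancel₀ _ (by linarith)⟩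
    refine ⟨(1 - t) • (P, 0) + t • (a, b), Or.inl ⟨1 - t, t, ?_, ?_, by ring, rfl⟩, ?_, ?_⟩
    · nlinarith
    · nlinarith
    · show _ * _ + _ * _ ≤ x
      nlinarith
    · show (1 - t) * 0 + t * b ≤ y
      exact le_of_mul_le_mul_left (by linear_combination h₁ + b * ht) (sub_pos.2 haP)
  · obtain ⟨t, ht⟩ : ∃ t, t * a = x := ⟨x / a, div_mul_cancel₀ _ ha.ne'⟩
    refine ⟨(1 - t) • (0, Q) + t • (a, b), Or.inr ⟨t, 1 - t, ?_, ?_, by ring, add_comm _ _⟩,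
      ?_, ?_⟩
    · nlinarith
    · nlinarith
    · show _ * _ + _ * _ ≤ x
      nlinarith
    · show (1 - t) * Q + t * b ≤ y
      exact le_of_mul_le_mul_left (by linear_combination h₂ - (Q - b) * ht) ha

theorem convexHull_eq_abovePolygon (ha : 0 < a) (haP : a < P) {U : Set (ℝ × ℝ)}
    (hU : IsUpperSet U) (hUP : U ⊆ abovePolygon P Q a b) (hA : (P, 0) ∈ convexHull ℝ U)
    (hM : (a, b) ∈ convexHull ℝ U) (hB : (0, Q) ∈ convexHull ℝ U) :
    convexHull ℝ U = abovePolygon P Q a b := by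
  refine (convexHull_min hUP convex_abovePolygon).antisymm fun z hz => ?_
  obtain ⟨w, hw, hwz⟩ := exists_segment_le_of_mem_abovePolygon ha haP hz
  refine isUpperSet_convexHull hU hwz ?_
  rcases hw with hw | hw
  · exact (convex_convexHull ℝ U).segment_subset hA hM hw
  · exact (convex_convexHull ℝ U).segment_subset hM hB hw

theorem quadrant_diff_abovePolygon_eq_union (ha : 0 < a) (haP : a < P) (hb : 0 < b)
    (hbQ : b < Q) (hab : Q * a + P * b ≤ P * Q) :
    {z : ℝ × ℝ | 0 ≤ z.1 ∧ 0 ≤ z.2} \ abovePolygon P Q a b =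
      {z | z.1 ∈ Ico 0 a ∧ z.2 ∈ Ico 0 ((a * Q - (Q - b) * z.1) / a)} ∪
        {z | z.1 ∈ Ico a P ∧ z.2 ∈ Ico 0 (b * (P - z.1) / (P - a))} := by
  have hPa : 0 < P - a := sub_pos.2 haP
  ext ⟨x, y⟩
  simp only [abovePolygon, mem_sdiff, mem_union, mem_ofPred_eq, mem_Ico, lt_div_iff₀ ha,
    lt_div_iff₀ hPa, not_and, not_le]
  constructor
  · rintro ⟨⟨hx, hy⟩, h⟩
    rcases lt_or_ge x a with hxa | hax
    · refine Or.inl ⟨⟨hx, hxa⟩, hy, ?_⟩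
      by_contra! h₂
      have h₁ : b * P ≤ b * x + (P - a) * y := by
        nlinarith [mul_nonneg (sub_nonneg.2 hxa.le) (sub_nonneg.2 hab)]
      linarith [h hx hy h₁]
    · refine Or.inr ⟨⟨hax, ?_⟩, hy, ?_⟩
      · by_contra! hPx
        nlinarith [h hx hy (by nlinarith), mul_le_mul_of_nonneg_left hPx (sub_pos.2 hbQ).le]
      · by_contra! h₁
        nlinarith [mul_lt_mul_of_pos_left (h hx hy (by linarith)) hPa,
          mul_nonneg (sub_nonneg.2 hax) (sub_nonneg.2 hab), mul_le_mul_of_nonneg_left h₁ ha.le]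
  · rintro (⟨⟨hx, -⟩, hy, h⟩ | ⟨⟨hax, -⟩, hy, h⟩)
    · exact ⟨⟨hx, hy⟩, fun _ _ _ => by linarith⟩
    · exact ⟨⟨by linarith, hy⟩, fun _ _ h₁ => by linarith⟩

theorem volume_quadrant_diff_abovePolygon (ha : 0 < a) (haP : a < P) (hb : 0 < b) (hbQ : b < Q)
    (hab : Q * a + P * b ≤ P * Q) :
    volume ({z : ℝ × ℝ | 0 ≤ z.1 ∧ 0 ≤ z.2} \ abovePolygon P Q a b) =
      ENNReal.ofReal ((Q * a + P * b) / 2) := by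
  have hPa : 0 < P - a := sub_pos.2 haP
  have h₁ : ∫ x in (0 : ℝ)..a, (a * Q - (Q - b) * x) / a = a * (Q + b) / 2 := by
    rw [intervalIntegral.integral_div, intervalIntegral.integral_sub intervalIntegrable_const
      (intervalIntegral.intervalIntegrable_id.const_mul _), intervalIntegral.integral_const,
      intervalIntegral.integral_const_mul, integral_id, smul_eq_mul]
    field_simp
    ring
  have h₂ : ∫ x in a..P, b * (P - x) / (P - a) = b * (P - a) / 2 := by
    rw [intervalIntegral.integral_div, intervalIntegral.integral_const_mul,
      intervalIntegral.integral_sub intervalIntegrable_const intervalIntegral.intervalIntegrable_id,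
      integral_id, intervalIntegral.integral_const, smul_eq_mul]
    field_simp
    ring
  rw [quadrant_diff_abovePolygon_eq_union ha haP hb hbQ hab,
    measure_union (disjoint_left.2 fun z h₁ h₂ => h₁.1.2.not_ge h₂.1.1)
      (measurableSet_region_between_co (f := fun _ => 0) (g := fun x => b * (P - x) / (P - a))
        measurable_const (by fun_prop) measurableSet_Ico),
    volume_subgraph_Ico (φ := fun x => (a * Q - (Q - b) * x) / a) (by fun_prop) ha.le
      fun x hx => div_nonneg (by nlinarith [hx.2]) ha.le,
    volume_subgraph_Ico (φ := fun x => b * (P - x) / (P - a)) (by fun_prop) haP.le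
      fun x hx => div_nonneg (by nlinarith [hx.2]) hPa.le,
    h₁, h₂, ← ENNReal.ofReal_add (by nlinarith) (by nlinarith)]
  congr 1
  ring

theorem newtonNumber_eq_of_gammaPlus_eq_abovePolygon (ha : 0 < a) (haP : a < P) (hb : 0 < b)
    (hbQ : b < Q) (hab : Q * a + P * b ≤ P * Q) {f : MvPolynomial (Fin 2) ℂ}
    (hf : gammaPlus f = abovePolygon P Q a b) : newtonNumber f = Q * a + P * b - P - Q + 1 := by
  have hreg : newtonRegion f = {z : ℝ × ℝ | 0 ≤ z.1 ∧ 0 ≤ z.2} \ abovePolygon P Q a b := by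
    rw [newtonRegion, hf]
  have hx : {x : ℝ | (x, (0 : ℝ)) ∈ newtonRegion f} = Ico 0 P := by
    ext x
    simp only [hreg, abovePolygon, mem_sdiff, mem_ofPred_eq, mem_Ico, le_refl, mul_zero, add_zero,
      true_and, and_true, not_and, not_le]
    constructor
    · rintro ⟨hx, h⟩
      refine ⟨hx, lt_of_not_ge fun hPx => ?_⟩
      nlinarith [h hx (mul_le_mul_of_nonneg_left hPx hb.le),
        mul_le_mul_of_nonneg_left hPx (sub_pos.2 hbQ).le]
    · rintro ⟨hx, hxP⟩
      exact ⟨hx, fun _ h => absurd h (not_le.2 (mul_lt_mul_of_pos_left hxP hb))⟩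
  have hy : {y : ℝ | ((0 : ℝ), y) ∈ newtonRegion f} = Ico 0 Q := by
    ext y
    simp only [hreg, abovePolygon, mem_sdiff, mem_ofPred_eq, mem_Ico, le_refl, mul_zero, zero_add,
      true_and, not_and, not_le]
    constructor
    · rintro ⟨hy, h⟩
      refine ⟨hy, lt_of_not_ge fun hQy => ?_⟩
      nlinarith [h hy (by nlinarith [mul_le_mul_of_nonneg_left hQy (sub_pos.2 haP).le]),
        mul_le_mul_of_nonneg_left hQy ha.le]
    · rintro ⟨hy, hyQ⟩
      exact ⟨hy, fun _ h => by nlinarith [mul_lt_mul_of_pos_left hyQ ha]⟩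
  rw [newtonNumber, hx, hy, hreg, volume_quadrant_diff_abovePolygon ha haP hb hbQ hab,
    Real.volume_Ico, Real.volume_Ico, ENNReal.toReal_ofReal (by nlinarith),
    ENNReal.toReal_ofReal (by linarith), ENNReal.toReal_ofReal (by linarith)]
  ring

end Polygon

def exponentPoints (f : MvPolynomial (Fin 2) ℂ) : Set (ℝ × ℝ) :=
  (fun m : Fin 2 →₀ ℕ => ((m 0 : ℝ), (m 1 : ℝ))) '' {m | m ∈ f.support ∧ m ≠ 0}

theorem gammaPlus_eq_convexHull_exponentPoints (f : MvPolynomial (Fin 2) ℂ) :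
    gammaPlus f = convexHull ℝ (⋃ v ∈ exponentPoints f, Ici v) := by
  rw [gammaPlus, exponentPoints, biUnion_image]
  simp only [Finset.mem_filter]
  rfl

theorem nonneg_of_mem_exponentPoints {f : MvPolynomial (Fin 2) ℂ} {v : ℝ × ℝ}
    (hv : v ∈ exponentPoints f) : 0 ≤ v.1 ∧ 0 ≤ v.2 := by
  obtain ⟨m, -, rfl⟩ := hv
  exact ⟨by positivity, by positivity⟩

theorem gammaPlus_add_C (f : MvPolynomial (Fin 2) ℂ) (c : ℂ) :
    gammaPlus (f + C c) = gammaPlus f := by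
  have : ({m ∈ (f + C c).support | m ≠ 0} : Finset _) = {m ∈ f.support | m ≠ 0} := by
    ext m
    rcases eq_or_ne m 0 with rfl | hm
    · simp
    · simp [hm, coeff_C, hm.symm]
  rw [gammaPlus, gammaPlus, this]

theorem newtonNumber_add_C (f : MvPolynomial (Fin 2) ℂ) (c : ℂ) :
    newtonNumber (f + C c) = newtonNumber f := by
  simp only [newtonNumber, newtonRegion, gammaPlus_add_C]

section Polygon

variable {P Q a b : ℝ} {f : MvPolynomial (Fin 2) ℂ}

theorem gammaPlus_eq_abovePolygon (ha : 0 < a) (haP : a < P) (hb : 0 < b) (hbQ : b < Q)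
    (hf : exponentPoints f ⊆ abovePolygon P Q a b) (hA : (P, 0) ∈ gammaPlus f)
    (hM : (a, b) ∈ gammaPlus f) (hB : (0, Q) ∈ gammaPlus f) :
    gammaPlus f = abovePolygon P Q a b := by
  rw [gammaPlus_eq_convexHull_exponentPoints] at hA hM hB ⊢
  refine convexHull_eq_abovePolygon ha haP (isUpperSet_iUnion₂ fun _ _ => isUpperSet_Ici _) ?_
    hA hM hB
  exact iUnion₂_subset fun v hv z hz =>
    isUpperSet_abovePolygon ha.le haP.le hb.le hbQ.le hz (hf hv)

theorem mem_gammaPlus_of_mem_exponentPoints {v : ℝ × ℝ} (hv : v ∈ exponentPoints f) :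
    v ∈ gammaPlus f := by
  rw [gammaPlus_eq_convexHull_exponentPoints]
  exact subset_convexHull ℝ _ (mem_iUnion₂.2 ⟨v, hv, self_mem_Ici⟩)

theorem newtonNumber_eq_of_exponentPoints_subset_abovePolygon (ha : 0 < a) (haP : a < P)
    (hb : 0 < b) (hbQ : b < Q) (hab : Q * a + P * b ≤ P * Q)
    (hf : exponentPoints f ⊆ abovePolygon P Q a b) (hA : (P, 0) ∈ exponentPoints f)
    (hM : (a, b) ∈ exponentPoints f) (hB : (0, Q) ∈ exponentPoints f) :
    newtonNumber f = Q * a + P * b - P - Q + 1 :=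
  newtonNumber_eq_of_gammaPlus_eq_abovePolygon ha haP hb hbQ hab <|
    gammaPlus_eq_abovePolygon ha haP hb hbQ hf (mem_gammaPlus_of_mem_exponentPoints hA)
      (mem_gammaPlus_of_mem_exponentPoints hM) (mem_gammaPlus_of_mem_exponentPoints hB)

theorem newtonNumber_eq_of_exponentPoints_above_segment (hP : 0 < P) (hQ : 0 < Q)
    (hf : ∀ v ∈ exponentPoints f, P * Q ≤ Q * v.1 + P * v.2) (hA : (P, 0) ∈ exponentPoints f)
    (hB : (0, Q) ∈ exponentPoints f) :
    newtonNumber f = P * Q - P - Q + 1 := by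
  have hA' := mem_gammaPlus_of_mem_exponentPoints hA
  have hB' := mem_gammaPlus_of_mem_exponentPoints hB
  have hM : (P / 2, Q / 2) ∈ gammaPlus f := by
    have hmid : (P / 2, Q / 2) = (1 / 2 : ℝ) • (P, 0) + (1 / 2 : ℝ) • (0, Q) := by
      ext <;> simp [div_eq_inv_mul]
    rw [hmid, gammaPlus_eq_convexHull_exponentPoints]
    rw [gammaPlus_eq_convexHull_exponentPoints] at hA' hB'
    exact convex_convexHull ℝ _ hA' hB' (by norm_num) (by norm_num) (by norm_num)
  have hf' : exponentPoints f ⊆ abovePolygon P Q (P / 2) (Q / 2) := fun v hv =>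
    ⟨(nonneg_of_mem_exponentPoints hv).1, (nonneg_of_mem_exponentPoints hv).2,
      by linarith [hf v hv], by linarith [hf v hv]⟩
  rw [newtonNumber_eq_of_gammaPlus_eq_abovePolygon (by positivity) (by linarith) (by positivity)
    (by linarith) (by linarith) (gammaPlus_eq_abovePolygon (by positivity) (by linarith)
      (by positivity) (by linarith) hf' hA' hM hB')]
  ring

end Polygon

section Binomial

variable {p q a b : ℕ}

theorem exponentPoints_X_pow_sub_X_pow (hp : p ≠ 0) (hq : q ≠ 0) :
    exponentPoints (X 0 ^ p - X 1 ^ q : MvPolynomial (Fin 2) ℂ) = {((p : ℝ), 0), (0, (q : ℝ))} := by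
  have hsupp : (X 0 ^ p - X 1 ^ q : MvPolynomial (Fin 2) ℂ).support =
      {Finsupp.single 0 p, Finsupp.single 1 q} := by
    ext m
    simp only [mem_support_iff, coeff_sub, X_pow_eq_monomial, coeff_monomial, Finset.mem_insert,
      Finset.mem_singleton, Finsupp.ext_iff, Fin.forall_fin_two, Finsupp.single_apply]
    split_ifs <;> norm_num <;> omega
  ext v
  simp only [exponentPoints, hsupp, Finset.mem_insert, Finset.mem_singleton, mem_image,
    mem_ofPred_eq, or_and_right, exists_or]
  simp [Finsupp.ext_iff, hp, hq, eq_comm]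

theorem exponentPoints_X_pow_sub_X_pow_add_X_pow_mul_X_pow (hp : p ≠ 0) (hq : q ≠ 0)
    (h₀ : ¬(a = 0 ∧ b = 0)) (h₁ : ¬(a = p ∧ b = 0)) (h₂ : ¬(a = 0 ∧ b = q)) :
    exponentPoints (X 0 ^ p - X 1 ^ q + X 0 ^ a * X 1 ^ b : MvPolynomial (Fin 2) ℂ) =
      {((p : ℝ), 0), (0, (q : ℝ)), ((a : ℝ), (b : ℝ))} := by
  have hsupp : (X 0 ^ p - X 1 ^ q + X 0 ^ a * X 1 ^ b : MvPolynomial (Fin 2) ℂ).support =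
      {Finsupp.single 0 p, Finsupp.single 1 q, Finsupp.single 0 a + Finsupp.single 1 b} := by
    ext m
    simp only [mem_support_iff, coeff_add, coeff_sub, X_pow_eq_monomial, monomial_mul, one_mul,
      coeff_monomial, Finset.mem_insert, Finset.mem_singleton, Finsupp.ext_iff, Fin.forall_fin_two,
      Finsupp.coe_add, Pi.add_apply, Finsupp.single_apply]
    split_ifs <;> norm_num <;> omega
  ext v
  simp only [exponentPoints, hsupp, Finset.mem_insert, Finset.mem_singleton, mem_image,
    mem_ofPred_eq, or_and_right, exists_or]
  simp [Finsupp.ext_iff, hp, hq, eq_comm]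
  tauto

theorem newtonNumber_X_pow_sub_X_pow (hp : 0 < p) (hq : 0 < q) :
    newtonNumber (X 0 ^ p - X 1 ^ q : MvPolynomial (Fin 2) ℂ) = p * q - p - q + 1 := by
  have h := exponentPoints_X_pow_sub_X_pow hp.ne' hq.ne'
  refine newtonNumber_eq_of_exponentPoints_above_segment (by positivity) (by positivity) ?_
    (by simp [h]) (by simp [h])
  rw [h]
  rintro v (rfl | rfl) <;> simp [mul_comm]

theorem newtonNumber_X_pow_sub_X_pow_add_X_pow_mul_X_pow (ha : 0 < a) (hb : 0 < b)
    (hab : q * a + p * b < p * q) :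
    newtonNumber (X 0 ^ p - X 1 ^ q + X 0 ^ a * X 1 ^ b : MvPolynomial (Fin 2) ℂ) =
      q * a + p * b - p - q + 1 := by
  have hap : a < p := by nlinarith
  have hbq : b < q := by nlinarith
  have h := exponentPoints_X_pow_sub_X_pow_add_X_pow_mul_X_pow (p := p) (q := q) (a := a) (b := b)
    (by omega) (by omega) (by omega) (by omega) (by omega)
  refine newtonNumber_eq_of_exponentPoints_subset_abovePolygon (by exact_mod_cast ha)
    (by exact_mod_cast hap) (by exact_mod_cast hb) (by exact_mod_cast hbq)
    (by exact_mod_cast hab.le) ?_ (by simp [h]) (by simp [h]) (by simp [h])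
  have hab' : (q : ℝ) * a + p * b ≤ p * q := by exact_mod_cast hab.le
  rw [h]
  rintro v (rfl | rfl | rfl) <;> refine ⟨by positivity, by positivity, ?_, ?_⟩ <;> simp only <;>
    nlinarith

theorem newtonNumber_X_pow_sub_X_pow_add_X_pow_mul_X_pow_of_left_eq_zero (hp : 0 < p)
    (ha : a = 0) (hb : 0 < b) (hbq : b < q) :
    newtonNumber (X 0 ^ p - X 1 ^ q + X 0 ^ a * X 1 ^ b : MvPolynomial (Fin 2) ℂ) =
      p * b - p - b + 1 := by
  have h := exponentPoints_X_pow_sub_X_pow_add_X_pow_mul_X_pow (p := p) (q := q) (a := a) (b := b)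
    (by omega) (by omega) (by omega) (by omega) (by omega)
  have hbq' : (b : ℝ) ≤ q := by exact_mod_cast hbq.le
  refine newtonNumber_eq_of_exponentPoints_above_segment (by positivity) (by positivity) ?_
    (by simp [h]) (by rw [h]; simp [ha])
  rw [h]
  rintro v (rfl | rfl | rfl) <;> simp [ha] <;> nlinarith

theorem newtonNumber_X_pow_sub_X_pow_add_X_pow_mul_X_pow_of_right_eq_zero (hq : 0 < q)
    (ha : 0 < a) (hap : a < p) (hb : b = 0) :
    newtonNumber (X 0 ^ p - X 1 ^ q + X 0 ^ a * X 1 ^ b : MvPolynomial (Fin 2) ℂ) =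
      a * q - a - q + 1 := by
  have h := exponentPoints_X_pow_sub_X_pow_add_X_pow_mul_X_pow (p := p) (q := q) (a := a) (b := b)
    (by omega) (by omega) (by omega) (by omega) (by omega)
  have hap' : (a : ℝ) ≤ p := by exact_mod_cast hap.le
  refine newtonNumber_eq_of_exponentPoints_above_segment (by positivity) (by positivity) ?_
    (by rw [h]; simp [hb]) (by simp [h])
  rw [h]
  rintro v (rfl | rfl | rfl) <;> simp [hb] <;> nlinarith

end Binomial

theorem exists_pos_mul_add_mul_add_gcd_eq {p q : ℕ} (hpq : q ≤ p) (hd : Nat.gcd p q < q) :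
    ∃ a b : ℕ, 0 < a ∧ 0 < b ∧ q * a + p * b + Nat.gcd p q = p * q := by
  set d := Nat.gcd p q
  have hd₀ : 0 < d := Nat.gcd_pos_of_pos_right p (by omega)
  have hdpq : d ≤ p - q := by
    have hne : p ≠ q := by rintro rfl; simp [d] at hd
    exact Nat.le_of_dvd (by omega) (Nat.dvd_sub (Nat.gcd_dvd_left p q) (Nat.gcd_dvd_right p q))
  -- With `d = p x + q y`, take `b ≡ -x (mod q)`: then `q ∣ p b + d`, `b ≠ 0` as `q ∤ d`, and the
  -- cofactor `a` is positive because `q a = p (q - b) - d ≥ p - d ≥ q`.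
  have hbez : (d : ℤ) = p * Nat.gcdA p q + q * Nat.gcdB p q := Nat.gcd_eq_gcd_ab p q
  obtain ⟨b, k, hb₀, hbq, hdiv⟩ : ∃ b k : ℤ, 0 ≤ b ∧ b < q ∧ b + q * k = -Nat.gcdA p q :=
    ⟨_, _, Int.emod_nonneg _ (by omega), Int.emod_lt_of_pos _ (by omega),
      Int.emod_add_mul_ediv _ _⟩
  have hkey : (p : ℤ) * b + d = q * (Nat.gcdB p q - p * k) := by
    linear_combination hbez + p * hdiv
  have hb₀ : 0 < b := by
    refine hb₀.lt_of_ne fun hb => hd₀.ne' ?_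
    have : (q : ℤ) ∣ d := ⟨Nat.gcdB p q - p * k, by simpa [← hb] using hkey⟩
    exact_mod_cast Int.eq_zero_of_dvd_of_nonneg_of_lt (by omega) (by omega) this
  obtain ⟨a, ha⟩ : ∃ a : ℤ, a = p - (Nat.gcdB p q - p * k) := ⟨_, rfl⟩
  have hsum : (q : ℤ) * a + p * b + d = p * q := by linear_combination q * ha + hkey
  have ha₀ : 0 < a := by nlinarith
  lift a to ℕ using ha₀.le
  lift b to ℕ using hb₀.le
  exact ⟨a, b, by omega, by omega, by exact_mod_cast hsum⟩

theorem gcd_le_newtonNumber_sub {p q a b : ℕ} (hpq : q ≤ p) (hd : Nat.gcd p q < q)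
    (hab : q * a + p * b < p * q)
    (hpos : 0 < newtonNumber (X 0 ^ p - X 1 ^ q : MvPolynomial (Fin 2) ℂ) -
      newtonNumber (X 0 ^ p - X 1 ^ q + X 0 ^ a * X 1 ^ b)) :
    (Nat.gcd p q : ℝ) ≤ newtonNumber (X 0 ^ p - X 1 ^ q : MvPolynomial (Fin 2) ℂ) -
      newtonNumber (X 0 ^ p - X 1 ^ q + X 0 ^ a * X 1 ^ b) := by
  have hp : 0 < p := by omega
  have hq : 0 < q := by omega
  have hdp : (Nat.gcd p q : ℝ) + 1 ≤ p := by exact_mod_cast (by omega : Nat.gcd p q + 1 ≤ p)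
  have hdq : (Nat.gcd p q : ℝ) + 1 ≤ q := by exact_mod_cast (by omega : Nat.gcd p q + 1 ≤ q)
  rcases Nat.eq_zero_or_pos a with ha | ha <;> rcases Nat.eq_zero_or_pos b with hb | hb
  · rw [ha, hb, pow_zero, pow_zero, mul_one, ← C_1, newtonNumber_add_C, sub_self] at hpos
    exact absurd hpos (lt_irrefl 0)
  · have hbq : b < q := by nlinarith
    have hbq' : (b : ℝ) + 1 ≤ q := by exact_mod_cast hbq
    rw [newtonNumber_X_pow_sub_X_pow hp hq,
      newtonNumber_X_pow_sub_X_pow_add_X_pow_mul_X_pow_of_left_eq_zero hp ha hb hbq]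
    nlinarith
  · have hap : a < p := by nlinarith
    have hap' : (a : ℝ) + 1 ≤ p := by exact_mod_cast hap
    rw [newtonNumber_X_pow_sub_X_pow hp hq,
      newtonNumber_X_pow_sub_X_pow_add_X_pow_mul_X_pow_of_right_eq_zero hq ha hap hb]
    nlinarith
  · have hdvd : Nat.gcd p q ∣ p * q - (q * a + p * b) :=
      Nat.dvd_sub ((Nat.gcd_dvd_left p q).mul_right q)
        (dvd_add ((Nat.gcd_dvd_right p q).mul_right a) ((Nat.gcd_dvd_left p q).mul_right b))
    have hle : ((Nat.gcd p q : ℕ) : ℝ) ≤ ((p * q - (q * a + p * b) : ℕ) : ℝ) :=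
      by exact_mod_cast Nat.le_of_dvd (by omega) hdvd
    rw [Nat.cast_sub hab.le] at hle
    push_cast at hle
    rw [newtonNumber_X_pow_sub_X_pow hp hq,
      newtonNumber_X_pow_sub_X_pow_add_X_pow_mul_X_pow ha hb hab]
    linarith

theorem nondeg_jump_eq_gcd_general (p q : ℕ) (hpq : q ≤ p)
    (hd : Nat.gcd p q < q) :
    IsLeast {m : ℝ | 0 < m ∧ ∃ a b : ℕ, q * a + p * b < p * q ∧
        m = newtonNumber ((X 0) ^ p - (X 1) ^ q)
              - newtonNumber ((X 0) ^ p - (X 1) ^ q + (X 0) ^ a * (X 1) ^ b)}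
      (Nat.gcd p q : ℝ) := by
  obtain ⟨a, b, ha, hb, hsum⟩ := exists_pos_mul_add_mul_add_gcd_eq hpq hd
  have hq : 0 < q := by omega
  have hd₀ : 0 < Nat.gcd p q := Nat.gcd_pos_of_pos_right p hq
  have hab : q * a + p * b < p * q := by omega
  refine ⟨⟨by exact_mod_cast hd₀, a, b, hab, ?_⟩, ?_⟩
  · have hsum' : (q : ℝ) * a + p * b + Nat.gcd p q = p * q := by exact_mod_cast hsum
    rw [newtonNumber_X_pow_sub_X_pow (by omega) hq,
      newtonNumber_X_pow_sub_X_pow_add_X_pow_mul_X_pow ha hb hab]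
    linarith
  · rintro m ⟨hm, a, b, hab, rfl⟩
    exact gcd_le_newtonNumber_sub hpq hd hab hm

/-- For `p ≥ q ≥ 2` with `d = gcd(p,q) < q`, the minimum nonzero value of
`ν(x^p - y^q) - ν(x^p - y^q + x^a y^b)` over monomials `x^a y^b` with `(a,b) ∈ ℕ²`
strictly below the segment from `(p,0)` to `(0,q)` equals `d`. -/
theorem nondeg_jump_eq_gcd (p q : ℕ) (hq : 2 ≤ q) (hpq : q ≤ p)
    (hd : Nat.gcd p q < q) :
    IsLeast {m : ℝ | 0 < m ∧ ∃ a b : ℕ, q * a + p * b < p * q ∧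
        m = newtonNumber ((X 0) ^ p - (X 1) ^ q)
              - newtonNumber ((X 0) ^ p - (X 1) ^ q + (X 0) ^ a * (X 1) ^ b)}
      (Nat.gcd p q : ℝ) :=
  nondeg_jump_eq_gcd_general p q hpq hd
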